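/- The Lie algebra W⁺ is generated as a Lie algebra by e_1 and e_2. -/
import Mathlib


/-- Structure constants of W⁺ (basis `e i = Finsupp.single i 1`, `i ≥ 1`; index 0 unused):
`[e i, e j] = (j - i) • e (i+j)`. -/
noncomputable def wittc (K : Type*) [Field K] (i j : ℕ) : ℕ →₀ K :=
  if 1 ≤ i ∧ 1 ≤ j then ((j : K) - (i : K)) • Finsupp.single (i + j) 1 else 0

/-- The bilinear extension of the bracket given by structure constants `c`. -/
noncomputable def brkt (K : Type*) [Field K] (c : ℕ → ℕ → (ℕ →₀ K)) (x y : ℕ →₀ K) :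
    ℕ →₀ K :=
  x.sum fun i a => y.sum fun j b => (a * b) • c i j

lemma brkt_single (K : Type*) [Field K] (c : ℕ → ℕ → (ℕ →₀ K)) (i j : ℕ) :
    brkt K c (Finsupp.single i 1) (Finsupp.single j 1) = c i j := by
  unfold brkt
  rw [Finsupp.sum_single_index, Finsupp.sum_single_index] <;> simp

/-- W⁺ is generated as a Lie algebra by `e 1` and `e 2` (over a field of characteristic 0):
every subspace containing `e 1` and `e 2` and closed under the bracket contains all basis
vectors `e n`, `n ≥ 1`. -/
theorem witt_plus_generated_by_e1_e2 (K : Type*) [Field K] [CharZero K]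
    (p : Submodule K (ℕ →₀ K))
    (h1 : Finsupp.single 1 (1 : K) ∈ p) (h2 : Finsupp.single 2 (1 : K) ∈ p)
    (hcl : ∀ x ∈ p, ∀ y ∈ p, brkt K (wittc K) x y ∈ p) :
    ∀ n : ℕ, 1 ≤ n → Finsupp.single n (1 : K) ∈ p := by
  intro n hn
  induction n using Nat.strong_induction_on with
  | _ n ih =>
    match n, hn with
    | 1, _ => exact h1
    | 2, _ => exact h2
    | (m+3), _ =>
      have hm : Finsupp.single (m+2) (1 : K) ∈ p := ih (m+2) (by omega) (by omega)
      have hb := hcl _ h1 _ hm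
      rw [brkt_single, wittc] at hb
      have hif : (1 ≤ 1 ∧ 1 ≤ m + 2) := ⟨le_refl _, by omega⟩
      rw [if_pos hif] at hb
      have hne : ((m+2 : ℕ) : K) - ((1:ℕ) : K) ≠ 0 :=
        sub_ne_zero.mpr (by exact_mod_cast (by omega : (m+2:ℕ) ≠ 1))
      have := p.smul_mem (((m+2 : ℕ) : K) - ((1:ℕ):K))⁻¹ hb
      rw [smul_smul, inv_mul_cancel₀ hne, one_smul] at this
      have h13 : 1 + (m+2) = m+3 := by omega
      rwa [h13] at this
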